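/- arXiv:0909.0929 — 3 statements merged into one kernel-verified Lean document; each statement's English description precedes it below -/
import Mathlib

section
/- For a nonzero n-form β on a finite-dimensional vector space F, the support S_β (the smallest subspace S of F* with β ∈ Λⁿ S) satisfies S_β^⊥ = ker β, where ker β = {v ∈ F : i_v β = 0} and S_β^⊥ denotes the annihilator of S_β in F. -/
open Module Function

variable {K : Type*} [Field K] {W : Type*} [AddCommGroup W] [Module K W]

/-- The wedge product `α 0 ∧ ⋯ ∧ α (n-1)` of `n` linear forms, as an alternating `n`-form. -/
noncomputable def detForm (n : ℕ) (α : Fin n → Module.Dual K W) : W [⋀^Fin n]→ₗ[K] K :=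
  (Matrix.detRowAlternating (R := K) (n := Fin n)).compLinearMap (LinearMap.pi α)

/-- The kernel of an alternating form under interior contraction:
`v ∈ kerForm β ↔ i_v β = 0`. -/
def kerForm {n : ℕ} (β : W [⋀^Fin n]→ₗ[K] K) : Submodule K W where
  carrier := {v | ∀ w : Fin n → W, (∃ i, w i = v) → β w = 0}
  zero_mem' := by
    rintro w ⟨i, hi⟩
    have h : w = Function.update w i (0 : W) := by rw [← hi, Function.update_eq_self]
    rw [h]
    simp
  add_mem' := by
    rintro a b ha hb w ⟨i, hi⟩
    have h : w = Function.update w i (a + b) := by rw [← hi, Function.update_eq_self]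
    rw [h, β.map_update_add]
    rw [ha _ ⟨i, by simp⟩, hb _ ⟨i, by simp⟩, add_zero]
  smul_mem' := by
    rintro c a ha w ⟨i, hi⟩
    have h : w = Function.update w i (c • a) := by rw [← hi, Function.update_eq_self]
    rw [h, β.map_update_smul, ha _ ⟨i, by simp⟩, smul_zero]

/-- The support of an alternating `n`-form `β`: the smallest subspace `S ⊆ W*` such that
`β ∈ Λⁿ S` (equivalently, `β` is a linear combination of wedges of elements of `S`). -/
noncomputable def supp {n : ℕ} (β : W [⋀^Fin n]→ₗ[K] K) : Submodule K (Module.Dual K W) :=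
  sInf {S | β ∈ Submodule.span K
    {γ | ∃ α : Fin n → Module.Dual K W, (∀ i, α i ∈ S) ∧ γ = detForm n α}}

/-- `L` is `k`-isotropic w.r.t. `ω`: every contraction of `ω` with `k+1` vectors of `L`
vanishes. -/
def kIsotropic {n : ℕ} (ω : W [⋀^Fin n]→ₗ[K] K) (k : ℕ) (L : Submodule K W) : Prop :=
  ∀ v : Fin n → W, (∀ i : Fin n, (i : ℕ) ≤ k → v i ∈ L) → ω v = 0

/-- `L` is maximal (1-)isotropic w.r.t. `ω`. -/
def MaximalIsotropic {n : ℕ} (ω : W [⋀^Fin n]→ₗ[K] K) (L : Submodule K W) : Prop :=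
  kIsotropic ω 1 L ∧ ∀ L' : Submodule K W, kIsotropic ω 1 L' → L ≤ L' → L' = L

/-- `v` is a decomposable vector w.r.t. the `(n+1)`-form `ω`, i.e. `i_v ω` is a
decomposable `n`-form. -/
def DecompVec {n : ℕ} (ω : W [⋀^Fin (n + 1)]→ₗ[K] K) (v : W) : Prop :=
  ∃ α : Fin n → Module.Dual K W, ω.curryLeft v = detForm n α

/-- `L` is decomposable w.r.t. `ω`: it has a basis of decomposable vectors. -/
def DecompSub {n : ℕ} (ω : W [⋀^Fin (n + 1)]→ₗ[K] K) (L : Submodule K W) : Prop :=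
  ∃ (m : ℕ) (b : Fin m → W), (∀ i, b i ∈ L) ∧ LinearIndependent K b ∧
    Submodule.span K (Set.range b) = L ∧ ∀ i, DecompVec ω (b i)


section AuxLemmas

variable {K : Type*} [Field K] {W : Type*} [AddCommGroup W] [Module K W]

lemma altSum_apply {n : ℕ} {α : Type*} (s : Finset α) (g : α → (W [⋀^Fin n]→ₗ[K] K))
    (v : Fin n → W) : (∑ a ∈ s, g a) v = ∑ a ∈ s, g a v := by
  induction s using Finset.cons_induction with
  | empty => simp
  | cons a t ha ih => rw [Finset.sum_cons, Finset.sum_cons, AlternatingMap.add_apply, ih]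

lemma mem_kerForm_iff {n : ℕ} {β : W [⋀^Fin n]→ₗ[K] K} {v : W} :
    v ∈ kerForm β ↔ ∀ w : Fin n → W, (∃ i, w i = v) → β w = 0 := Iff.rfl

lemma detForm_apply {n : ℕ} (α : Fin n → Module.Dual K W) (v : Fin n → W) :
    detForm n α v = Matrix.det (Matrix.of fun a b => α b (v a)) := rfl

/-- The contraction of `β` at slot `i`, with the other arguments given by `w`, as a linear
functional. -/
noncomputable def contrF {n : ℕ} (β : W [⋀^Fin n]→ₗ[K] K) (w : Fin n → W) (i : Fin n) :
    Module.Dual K W :=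
  β.toMultilinearMap.toLinearMap w i

lemma contrF_apply {n : ℕ} (β : W [⋀^Fin n]→ₗ[K] K) (w : Fin n → W) (i : Fin n) (x : W) :
    contrF β w i x = β (Function.update w i x) := rfl

lemma contrF_detForm_mem {n : ℕ} (α : Fin n → Module.Dual K W) (w : Fin n → W) (i : Fin n) :
    contrF (detForm n α) w i ∈ Submodule.span K (Set.range α) := by
  classical
  have key : contrF (detForm n α) w i =
      ∑ b : Fin n, (Matrix.det (Matrix.updateRow (Matrix.of fun a c => α c (w a)) i
        (fun j => if b = j then 1 else 0))) • α b := by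
    ext x
    have h1 : (Matrix.of fun a c => α c (Function.update w i x a)) =
        Matrix.updateRow (Matrix.of fun a c => α c (w a)) i (fun c => α c x) := by
      ext a c
      by_cases h : a = i
      · subst h; simp [Matrix.updateRow_self]
      · simp [Matrix.updateRow_ne h, Function.update_of_ne h]
    have h2 := pi_eq_sum_univ (fun c => α c x)
    rw [contrF_apply, detForm_apply, h1]
    have h3 : ∀ r : Fin n → K, Matrix.det (Matrix.updateRow (Matrix.of fun a c => α c (w a)) i r)
        = Matrix.detRowAlternating (Function.update (fun a c => α c (w a)) i r) := by
      intro r; rfl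
    rw [h3, h2]
    rw [Matrix.detRowAlternating.map_update_sum]
    simp only [AlternatingMap.map_update_smul]
    simp only [LinearMap.coe_sum, Finset.sum_apply, LinearMap.smul_apply, smul_eq_mul]
    refine Finset.sum_congr rfl fun b _ => ?_
    rw [← h3]
    ring
  rw [key]
  exact Submodule.sum_mem _ fun b _ =>
    Submodule.smul_mem _ _ (Submodule.subset_span ⟨b, rfl⟩)

lemma contrF_mem {n : ℕ} (S : Submodule K (Module.Dual K W)) {β : W [⋀^Fin n]→ₗ[K] K}
    (hβ : β ∈ Submodule.span K
      {γ | ∃ α : Fin n → Module.Dual K W, (∀ i, α i ∈ S) ∧ γ = detForm n α})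
    (w : Fin n → W) (i : Fin n) : contrF β w i ∈ S := by
  classical
  let L : (W [⋀^Fin n]→ₗ[K] K) →ₗ[K] Module.Dual K W :=
    { toFun := fun γ => contrF γ w i
      map_add' := fun γ₁ γ₂ => by
        ext x; simp [contrF_apply]
      map_smul' := fun c γ => by
        ext x; simp [contrF_apply] }
  have hle : Submodule.span K
      {γ | ∃ α : Fin n → Module.Dual K W, (∀ i, α i ∈ S) ∧ γ = detForm n α} ≤ S.comap L := by
    rw [Submodule.span_le]
    rintro γ ⟨α, hα, rfl⟩
    have h1 : contrF (detForm n α) w i ∈ Submodule.span K (Set.range α) :=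
      contrF_detForm_mem α w i
    have h2 : Submodule.span K (Set.range α) ≤ S := by
      rw [Submodule.span_le]; rintro φ ⟨b, rfl⟩; exact hα b
    exact h2 h1
  exact hle hβ

lemma key_mem [FiniteDimensional K W] {n : ℕ} (β : W [⋀^Fin n]→ₗ[K] K) :
    β ∈ Submodule.span K {γ | ∃ α : Fin n → Module.Dual K W,
      (∀ i, α i ∈ (kerForm β).dualAnnihilator) ∧ γ = detForm n α} := by
  classical
  obtain ⟨U, hU⟩ := (kerForm β).exists_isCompl
  set k := kerForm β with hk
  let d := Module.finrank K U
  let bU : Basis (Fin d) K U := Module.finBasis K U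
  let bk : Basis (Fin (Module.finrank K k)) K k := Module.finBasis K k
  let e : Basis (Fin (Module.finrank K k) ⊕ Fin d) K W :=
    (bk.prod bU).map (Submodule.prodEquivOfIsCompl k U hU)
  let proj : W →ₗ[K] U := U.linearProjOfIsCompl k hU.symm
  let f : Fin d → Module.Dual K W := fun j => (bU.coord j).comp proj
  have hf_k : ∀ j, ∀ v ∈ k, f j v = 0 := by
    intro j v hv
    have : proj v = 0 := Submodule.projectionOnto_apply_of_mem_right hU.symm hv
    simp [f, this]
  have hf_u : ∀ j j', f j ((bU j' : U) : W) = if j' = j then 1 else 0 := by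
    intro j j'
    have : proj ((bU j' : U) : W) = bU j' := Submodule.projectionOnto_apply_left hU.symm _
    simp [f, this, Basis.coord_apply, Basis.repr_self, Finsupp.single_apply]
  have he_inl : ∀ i, e (Sum.inl i) = ((bk i : k) : W) := by
    intro i
    simp [e, Basis.map_apply, Basis.prod_apply, Submodule.coe_prodEquivOfIsCompl']
  have he_inr : ∀ j, e (Sum.inr j) = ((bU j : U) : W) := by
    intro j
    simp [e, Basis.map_apply, Basis.prod_apply, Submodule.coe_prodEquivOfIsCompl']
  let Sincr : Finset (Fin n → Fin d) := Finset.univ.filter StrictMono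
  let G : W [⋀^Fin n]→ₗ[K] K :=
    ∑ σ ∈ Sincr, β (fun a => ((bU (σ a) : U) : W)) • detForm n (fun a => f (σ a))
  have hdet_row_zero : ∀ (σ : Fin n → Fin d) (v : Fin n → W) (a : Fin n), v a ∈ k →
      detForm n (fun b => f (σ b)) v = 0 := by
    intro σ v a hva
    rw [detForm_apply]
    exact Matrix.det_eq_zero_of_row_eq_zero a fun b => hf_k (σ b) _ hva
  have main : ∀ σ' : Fin n → Fin d, StrictMono σ' →
      G (fun a => ((bU (σ' a) : U) : W)) = β (fun a => ((bU (σ' a) : U) : W)) := by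
    intro σ' hσ'
    have hdet : ∀ σ : Fin n → Fin d, StrictMono σ →
        detForm n (fun b => f (σ b)) (fun a => ((bU (σ' a) : U) : W))
          = if σ = σ' then 1 else 0 := by
      intro σ hσ
      rw [detForm_apply]
      by_cases hss : σ = σ'
      · subst hss
        rw [if_pos rfl]
        have : (Matrix.of fun a b => f (σ b) ((bU (σ a) : U) : W)) = (1 : Matrix (Fin n) (Fin n) K) := by
          ext a b
          rw [Matrix.of_apply, hf_u, Matrix.one_apply]
          by_cases hab : a = b
          · subst hab; simp
          · rw [if_neg (fun h => hab (hσ.injective h)), if_neg hab]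
        rw [this, Matrix.det_one]
      · rw [if_neg hss]
        have hex : ∃ a, ∀ b, σ' a ≠ σ b := by
          by_contra hcon
          push_neg at hcon
          apply hss
          have himσ : (Finset.univ.image σ).card = n := by
            rw [Finset.card_image_of_injective _ hσ.injective, Finset.card_univ,
              Fintype.card_fin]
          have hσ'in : ∀ a, σ' a ∈ Finset.univ.image σ := by
            intro a
            obtain ⟨b, hb⟩ := hcon a
            exact Finset.mem_image.2 ⟨b, Finset.mem_univ b, hb.symm⟩
          have h1 : σ = (Finset.univ.image σ).orderEmbOfFin himσ :=
            Finset.orderEmbOfFin_unique himσ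
              (fun a => Finset.mem_image_of_mem σ (Finset.mem_univ a)) hσ
          have h2 : σ' = (Finset.univ.image σ).orderEmbOfFin himσ :=
            Finset.orderEmbOfFin_unique himσ hσ'in hσ'
          rw [h1, h2]
        obtain ⟨a, ha⟩ := hex
        refine Matrix.det_eq_zero_of_row_eq_zero a fun b => ?_
        rw [Matrix.of_apply, hf_u, if_neg (ha b)]
    have hσ'mem : σ' ∈ Sincr := Finset.mem_filter.2 ⟨Finset.mem_univ _, hσ'⟩
    show (∑ σ ∈ Sincr, (β fun a => ((bU (σ a) : U) : W)) • detForm n fun a => f (σ a))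
      (fun a => ((bU (σ' a) : U) : W)) = _
    rw [altSum_apply]
    simp only [AlternatingMap.smul_apply]
    rw [Finset.sum_eq_single σ']
    · rw [hdet σ' hσ', if_pos rfl, smul_eq_mul, mul_one]
    · intro σ hσ hne
      rw [hdet σ (Finset.mem_filter.1 hσ).2, if_neg hne, smul_eq_mul, mul_zero]
    · intro h; exact absurd hσ'mem h
  have hG : G = β := by
    apply Basis.ext_alternating e
    intro v hv
    by_cases hcase : ∃ a i₀, v a = Sum.inl i₀
    · obtain ⟨a, i₀, ha⟩ := hcase
      have hmem : e (v a) ∈ k := by rw [ha, he_inl]; exact (bk i₀).2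
      have hβ0 : β (fun i => e (v i)) = 0 := by
        have := (mem_kerForm_iff (β := β)).1 (by rw [← hk]; exact hmem)
        exact this (fun i => e (v i)) ⟨a, rfl⟩
      rw [hβ0]
      show (∑ σ ∈ Sincr, (β fun a => ((bU (σ a) : U) : W)) • detForm n fun a => f (σ a))
        (fun i => e (v i)) = 0
      rw [altSum_apply]
      refine Finset.sum_eq_zero fun σ _ => ?_
      rw [AlternatingMap.smul_apply]
      rw [hdet_row_zero σ _ a hmem, smul_zero]
    · push_neg at hcase
      have hchoice : ∀ a, ∃ j, v a = Sum.inr j := by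
        intro a
        cases hva : v a with
        | inl i₀ => exact absurd hva (hcase a i₀)
        | inr j => exact ⟨j, rfl⟩
      choose ρ hρ using hchoice
      have hev : (fun a => e (v a)) = fun a => ((bU (ρ a) : U) : W) := by
        funext a; rw [hρ a, he_inr]
      have hρinj : Function.Injective ρ := by
        intro a b h
        apply hv
        rw [hρ a, hρ b, h]
      rw [hev]
      -- factor ρ = σ' ∘ τ with σ' strictly monotone and τ a permutation
      set s : Finset (Fin d) := Finset.univ.image ρ with hs_def
      have hs : s.card = n := by
        rw [hs_def, Finset.card_image_of_injective _ hρinj, Finset.card_univ, Fintype.card_fin]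
      set σ' : Fin n → Fin d := (s.orderEmbOfFin hs : Fin n → Fin d) with hσ'_def
      have hσ'mono : StrictMono σ' := (s.orderEmbOfFin hs).strictMono
      have hmemρ : ∀ a, ρ a ∈ s := fun a => Finset.mem_image_of_mem ρ (Finset.mem_univ a)
      let g : Fin n → Fin n := fun a => (s.orderIsoOfFin hs).symm ⟨ρ a, hmemρ a⟩
      have hginj : Function.Injective g := by
        intro a b h
        apply hρinj
        have h2 : ((s.orderIsoOfFin hs) (g a) : Fin d) = ((s.orderIsoOfFin hs) (g b) : Fin d) := by
          rw [h]
        simpa [g, OrderIso.apply_symm_apply] using h2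
      let τ : Equiv.Perm (Fin n) :=
        Equiv.ofBijective g (Finite.injective_iff_bijective.1 hginj)
      have hστ : ∀ a, σ' (τ a) = ρ a := by
        intro a
        show σ' (g a) = ρ a
        have : (s.orderIsoOfFin hs) (g a) = ⟨ρ a, hmemρ a⟩ := by
          simp [g]
        have h2 := congrArg (fun x : s => (x : Fin d)) this
        simpa [σ', Finset.coe_orderIsoOfFin_apply] using h2
      have hcomp : (fun a => ((bU (ρ a) : U) : W))
          = (fun a => ((bU (σ' a) : U) : W)) ∘ τ := by
        funext a
        simp [Function.comp, hστ a]
      rw [hcomp, AlternatingMap.map_perm, AlternatingMap.map_perm, main σ' hσ'mono]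
  rw [← hG]
  refine Submodule.sum_mem _ fun σ _ => Submodule.smul_mem _ _ (Submodule.subset_span ?_)
  exact ⟨fun a => f (σ a), fun i => (Submodule.mem_dualAnnihilator _).2 (fun v hv => hf_k _ v hv),
    rfl⟩

end AuxLemmas

/-- For a nonzero `n`-form `β` on a finite-dimensional space, the annihilator of
the support equals the kernel: `S_β^⊥ = ker β`. -/
theorem stmt0 [FiniteDimensional K W] {n : ℕ} (β : W [⋀^Fin n]→ₗ[K] K) (hβ : β ≠ 0) :
    (supp β).dualCoannihilator = kerForm β := by
  classical
  ext v
  rw [Submodule.mem_dualCoannihilator]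
  constructor
  · intro hv
    rw [mem_kerForm_iff]
    rintro w ⟨i, hi⟩
    have hφ : contrF β w i ∈ supp β := by
      rw [supp, Submodule.mem_sInf]
      intro S hS
      exact contrF_mem S hS w i
    have := hv _ hφ
    rw [contrF_apply, ← hi, Function.update_eq_self] at this
    exact this
  · intro hv φ hφ
    have hle : supp β ≤ (kerForm β).dualAnnihilator := sInf_le (key_mem β)
    exact (Submodule.mem_dualAnnihilator _).1 (hle hφ) v hv
end

section
/- For any two subspaces S₁, S₂ of a finite-dimensional vector space E and any n, the intersection of Λⁿ S₁ and Λⁿ S₂ inside Λⁿ E equals Λⁿ (S₁ ∩ S₂). -/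
open Module

variable {K : Type*} [Field K] {E : Type*} [AddCommGroup E] [Module K E]

/-- The image of `Λⁿ S` inside the exterior algebra of `E`, for a subspace `S ⊆ E`:
the span of wedges of `n` elements of `S`. -/
noncomputable def lambdaPow (n : ℕ) (S : Submodule K E) :
    Submodule K (ExteriorAlgebra K E) :=
  Submodule.span K
    {x | ∃ v : Fin n → E, (∀ i, v i ∈ S) ∧ x = ExteriorAlgebra.ιMulti K n v}

theorem lambdaPow_mono (n : ℕ) {S T : Submodule K E} (h : S ≤ T) :
    lambdaPow n S ≤ lambdaPow n T := by
  apply Submodule.span_mono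
  rintro x ⟨v, hv, rfl⟩
  exact ⟨v, fun i => h (hv i), rfl⟩

theorem lambdaPow_map_mem (n : ℕ) {S T : Submodule K E} (p : E →ₗ[K] E)
    (hp : ∀ x ∈ S, p x ∈ T) {x} (hx : x ∈ lambdaPow n S) :
    ExteriorAlgebra.map p x ∈ lambdaPow n T := by
  induction hx using Submodule.span_induction with
  | mem x hx =>
    obtain ⟨v, hv, rfl⟩ := hx
    rw [ExteriorAlgebra.map_apply_ιMulti]
    exact Submodule.subset_span ⟨p ∘ v, fun i => hp _ (hv i), rfl⟩
  | zero => simp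
  | add a b _ _ ha hb => rw [map_add]; exact add_mem ha hb
  | smul c a _ ha => rw [map_smul]; exact Submodule.smul_mem _ _ ha

theorem lambdaPow_map_fix (n : ℕ) {S : Submodule K E} (p : E →ₗ[K] E)
    (hp : ∀ x ∈ S, p x = x) {x} (hx : x ∈ lambdaPow n S) :
    ExteriorAlgebra.map p x = x := by
  induction hx using Submodule.span_induction with
  | mem x hx =>
    obtain ⟨v, hv, rfl⟩ := hx
    rw [ExteriorAlgebra.map_apply_ιMulti]
    congr 1
    funext i
    exact hp _ (hv i)
  | zero => simp
  | add a b _ _ ha hb => rw [map_add, ha, hb]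
  | smul c a _ ha => rw [map_smul, ha]

/-- `Λⁿ S₁ ∩ Λⁿ S₂ = Λⁿ (S₁ ∩ S₂)` inside `Λⁿ E`. -/
theorem stmt2 [FiniteDimensional K E] (n : ℕ) (S₁ S₂ : Submodule K E) :
    lambdaPow n S₁ ⊓ lambdaPow n S₂ = lambdaPow n (S₁ ⊓ S₂) := by
  refine le_antisymm ?_ (le_inf (lambdaPow_mono n inf_le_left)
    (lambdaPow_mono n inf_le_right))
  -- construct the complement C₁ of W := S₁ ⊓ S₂ inside S₁
  set W : Submodule K E := S₁ ⊓ S₂ with hW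
  obtain ⟨U', hU'⟩ := (W.comap S₁.subtype).exists_isCompl
  set C₁ : Submodule K E := U'.map S₁.subtype with hC₁
  have hC₁le : C₁ ≤ S₁ := Submodule.map_subtype_le _ _
  have hmapU : (W.comap S₁.subtype).map S₁.subtype = W := by
    rw [Submodule.map_comap_subtype, inf_eq_right.2 inf_le_left]
  have hsupWC : W ⊔ C₁ = S₁ := by
    rw [hC₁, ← hmapU, ← Submodule.map_sup, hU'.codisjoint.eq_top,
      Submodule.map_subtype_top]
  have hdisjWC : Disjoint W C₁ := by
    rw [disjoint_iff, hC₁, ← hmapU, ← Submodule.map_inf _ (Submodule.injective_subtype S₁),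
      hU'.disjoint.eq_bot, Submodule.map_bot]
  have hdisjC₁S₂ : Disjoint C₁ S₂ := by
    rw [disjoint_iff, eq_bot_iff]
    intro x hx
    have hxW : x ∈ W := ⟨hC₁le hx.1, hx.2⟩
    exact (disjoint_iff.1 hdisjWC) ▸ (Submodule.mem_inf.2 ⟨hxW, hx.1⟩)
  -- extend S₂ to a complement D of C₁
  obtain ⟨V, hV⟩ := (C₁ ⊔ S₂).exists_isCompl
  set D : Submodule K E := S₂ ⊔ V with hD
  have hcompl : IsCompl C₁ D := by
    constructor
    · exact hdisjC₁S₂.disjoint_sup_right_of_disjoint_sup_left hV.disjoint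
    · rw [codisjoint_iff, hD, ← sup_assoc, hV.codisjoint.eq_top]
  -- the projection onto D along C₁
  set π := D.projectionOnto C₁ hcompl.symm
  set p : E →ₗ[K] E := D.subtype ∘ₗ π with hp
  have hS₂D : S₂ ≤ D := le_sup_left
  have hfixD : ∀ x ∈ D, p x = x := by
    intro x hx
    simpa [p, π] using congrArg Subtype.val
      (Submodule.projectionOnto_apply_left hcompl.symm ⟨x, hx⟩)
  have hkillC : ∀ x ∈ C₁, p x = 0 := by
    intro x hx
    simp [hp, π, Submodule.projectionOnto_apply_of_mem_right hcompl.symm hx]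
  have hmapS₁ : ∀ x ∈ S₁, p x ∈ W := by
    intro x hx
    rw [← hsupWC] at hx
    obtain ⟨w, hw, c, hc, rfl⟩ := Submodule.mem_sup.1 hx
    rw [map_add, hkillC c hc, add_zero, hfixD w (hS₂D hw.2)]
    exact hw
  rintro x ⟨h1, h2⟩
  have := lambdaPow_map_mem n p hmapS₁ h1
  rwa [lambdaPow_map_fix n p (fun y hy => hfixD y (hS₂D hy)) h2] at this
end

section
/- Let v ∈ W be decomposable with respect to an (n+1)-form ω (i.e., i_v ω is a decomposable n-form) with i_v ω ≠ 0, and suppose ω(v, f₁,...,fₙ) = 1 for some f₁,...,fₙ ∈ W. Then W = span{f₁,...,fₙ} ⊕ ker(i_v ω). -/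
open Module Function

variable {K : Type*} [Field K] {W : Type*} [AddCommGroup W] [Module K W]

/-- if `v` is decomposable w.r.t. `ω`, `i_v ω ≠ 0` and `ω(v,f₁,…,fₙ) = 1`,
then `W = span{f₁,…,fₙ} ⊕ ker (i_v ω)`. -/
theorem stmt9 {n : ℕ} (ω : W [⋀^Fin (n + 1)]→ₗ[K] K) (v : W)
    (hdec : DecompVec ω v) (hne : ω.curryLeft v ≠ 0)
    (f : Fin n → W) (hf : ω.curryLeft v f = 1) :
    IsCompl (Submodule.span K (Set.range f)) (kerForm (ω.curryLeft v)) := by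
  classical
  obtain ⟨α, hα⟩ := hdec
  set β := ω.curryLeft v with hβ
  -- evaluation of β as a determinant
  have hβdet : ∀ w : Fin n → W, β w = Matrix.det (Matrix.of fun i k => α k (w i)) := by
    intro w
    rw [hα]
    rfl
  -- the linear map w ↦ (β (update f j w))_j
  let φ : W →ₗ[K] (Fin n → K) :=
    LinearMap.pi fun j => β.toMultilinearMap.toLinearMap f j
  have hφ_apply : ∀ (w : W) (j : Fin n), φ w j = β (Function.update f j w) := fun w j => rfl
  have hφf : ∀ i, φ (f i) = Pi.single i 1 := by
    intro i; funext j
    rw [hφ_apply]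
    rcases eq_or_ne j i with rfl | hji
    · rw [Function.update_eq_self, Pi.single_eq_same]; exact hf
    · rw [Pi.single_eq_of_ne hji]
      refine β.map_eq_zero_of_eq _ (i := j) (j := i) ?_ hji
      rw [Function.update_self, Function.update_of_ne (Ne.symm hji)]
  -- the linear combination map
  let ψ : (Fin n → K) →ₗ[K] W := Fintype.linearCombination K f
  have hψ_apply : ∀ c : Fin n → K, ψ c = ∑ i, c i • f i := fun c => rfl
  have hψ_mem : ∀ c, ψ c ∈ Submodule.span K (Set.range f) := by
    intro c
    rw [hψ_apply]
    exact Submodule.sum_mem _ fun i _ =>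
      Submodule.smul_mem _ _ (Submodule.subset_span ⟨i, rfl⟩)
  have hφψ : ∀ c, φ (ψ c) = c := by
    intro c
    rw [hψ_apply, map_sum]
    simp only [map_smul, hφf]
    funext j
    simp [Finset.sum_apply, Pi.single_apply]
  -- span f is the range of ψ
  have hspan : Submodule.span K (Set.range f) = LinearMap.range ψ := by
    apply le_antisymm
    · rw [Submodule.span_le]
      rintro _ ⟨i, rfl⟩
      exact ⟨Pi.single i 1, by simp [hψ_apply, Pi.single_apply]⟩
    · rintro _ ⟨c, rfl⟩
      exact hψ_mem c
  -- kerForm β ≤ ker φ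
  have hker1 : kerForm β ≤ LinearMap.ker φ := by
    intro w hw
    rw [LinearMap.mem_ker]
    funext j
    rw [hφ_apply]
    exact hw _ ⟨j, Function.update_self _ _ _⟩
  -- ker φ ≤ kerForm β (uses decomposability)
  have hker2 : LinearMap.ker φ ≤ kerForm β := by
    intro w hw
    rw [LinearMap.mem_ker] at hw
    set M : Matrix (Fin n) (Fin n) K := Matrix.of fun i k => α k (f i) with hM
    have hdetM : M.det = 1 := by rw [← hβdet, hf]
    set b : Fin n → K := fun k => α k w with hb
    have hcram : Matrix.cramer M.transpose b = 0 := by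
      funext j
      rw [Matrix.cramer_transpose_apply]
      have : M.updateRow j b = Matrix.of fun i k => α k (Function.update f j w i) := by
        funext i k
        rcases eq_or_ne i j with rfl | hij
        · simp [Matrix.updateRow_apply, hb]
        · simp [Matrix.updateRow_apply, hij, hM, Function.update_of_ne hij]
      rw [this, ← hβdet, ← hφ_apply, hw]
    have hb0 : b = 0 := by
      have := Matrix.mulVec_cramer M.transpose b
      rw [hcram, Matrix.mulVec_zero, Matrix.det_transpose, hdetM, one_smul] at this
      exact this.symm
    intro u ⟨i0, hi0⟩
    rw [hβdet]
    refine Matrix.det_eq_zero_of_row_eq_zero i0 fun k => ?_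
    have : α k (u i0) = b k := by rw [hi0]
    simp only [Matrix.of_apply, this, hb0, Pi.zero_apply]
  have hkerEq : kerForm β = LinearMap.ker φ := le_antisymm hker1 hker2
  constructor
  · -- disjoint
    rw [disjoint_iff_inf_le]
    intro x hx
    rw [Submodule.mem_inf] at hx
    obtain ⟨hx1, hx2⟩ := hx
    rw [hspan] at hx1
    obtain ⟨c, rfl⟩ := hx1
    rw [hkerEq, LinearMap.mem_ker] at hx2
    have : c = 0 := by rw [← hφψ c, hx2]
    rw [this, map_zero]
    exact Submodule.zero_mem _
  · -- codisjoint
    rw [codisjoint_iff_le_sup]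
    intro w _
    have h1 : ψ (φ w) ∈ Submodule.span K (Set.range f) := hψ_mem _
    have h2 : w - ψ (φ w) ∈ kerForm β := by
      rw [hkerEq, LinearMap.mem_ker, map_sub, hφψ, sub_self]
    have : w = ψ (φ w) + (w - ψ (φ w)) := by abel
    rw [this]
    exact Submodule.add_mem _ (Submodule.mem_sup_left h1) (Submodule.mem_sup_right h2)
end
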